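/- Let ψ = (ψ₁, ψ₂) : ℝ² → ℝ² be a C¹ diffeomorphism with Jacobian J_ψ. Let p₁, p̃₁, q₁, q̃₁, p̃₂, q̃₂ : ℝ → (0, ∞) be continuously differentiable strictly positive probability densities, and let p₂, q₂ : ℝ × ℝ → (0, ∞) be continuously differentiable strictly positive conditional densities, i.e., ∫ p₂(v₁, v₂) dv₂ = 1 for every v₁ and ∫ q₂(z₁, z₂) dz₂ = 1 for every z₁. Assume the nowhere-vanishing ratio-derivative conditions: (p̃₁/p₁)'(v₁) ≠ 0 and (q̃₁/q₁)'(z₁) ≠ 0 for all v₁, z₁ ∈ ℝ, and ∂/∂v₂ [p̃₂(v₂)/p₂(v₁, v₂)] ≠ 0 and ∂/∂z₂ [q̃₂(z₂)/q₂(z₁, z₂)] ≠ 0 for all (v₁, v₂), (z₁, z₂) ∈ ℝ². Suppose the following misaligned-intervention-target identities hold for all z = (z₁, z₂) ∈ ℝ²: (1) q₁(z₁)·q₂(z₁, z₂) = p₁(ψ₁(z))·p₂(ψ₁(z), ψ₂(z))·|det J_ψ(z)|; (2) q̃₁(z₁)·q₂(z₁, z₂) = p₁(ψ₁(z))·p̃₂(ψ₂(z))·|det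 J_ψ(z)|; (3) q₁(z₁)·q̃₂(z₂) = p̃₁(ψ₁(z))·p₂(ψ₁(z), ψ₂(z))·|det J_ψ(z)|. Then the genericity condition fails: for every continuous function φ : (0, ∞) → ℝ such that both (v₁, v₂) ↦ φ(p̃₂(v₂)/p₂(v₁, v₂))·p₁(v₁)·p₂(v₁, v₂) and (v₁, v₂) ↦ φ(p̃₂(v₂)/p₂(v₁, v₂))·p̃₁(v₁)·p₂(v₁, v₂) are Lebesgue integrable on ℝ², one has ∬ φ(p̃₂(v₂)/p₂(v₁, v₂))·p₁(v₁)·p₂(v₁, v₂) dv₁ dv₂ = ∬ φ(p̃₂(v₂)/p₂(v₁, v₂))·p̃₁(v₁)·p₂(v₁, v₂) dv₁ dv₂. -/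

import Mathlib

open MeasureTheory

/-- The Jacobian matrix of `ψ : ℝⁿ → ℝⁿ` at `z`: `(J_ψ(z))_{ij} = ∂ψ_i/∂z_j (z)`. -/
noncomputable def jacobian {n : ℕ} (ψ : (Fin n → ℝ) → (Fin n → ℝ)) (z : Fin n → ℝ) :
    Matrix (Fin n) (Fin n) ℝ :=
  Matrix.of fun i j => fderiv ℝ ψ z (Pi.single j 1) i

/-- The `jacobian` matrix is the matrix of the Fréchet derivative, so its determinant is the
determinant of the derivative as a continuous linear map. -/
lemma jacobian_det_eq {n : ℕ} (ψ : (Fin n → ℝ) → (Fin n → ℝ)) (z : Fin n → ℝ) :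
    (jacobian ψ z).det = (fderiv ℝ ψ z).det := by
  have : jacobian ψ z
      = LinearMap.toMatrix' ((fderiv ℝ ψ z : (Fin n → ℝ) →L[ℝ] (Fin n → ℝ)) :
        (Fin n → ℝ) →ₗ[ℝ] (Fin n → ℝ)) := by
    have hs : ∀ j : Fin n, (Pi.single j (1 : ℝ)) = (fun j' => if j' = j then (1 : ℝ) else 0) := by
      intro j; funext j'; simp [Pi.single_apply]
    apply Matrix.ext
    intro i j
    simp only [jacobian, Matrix.of_apply, LinearMap.toMatrix'_apply,
      ContinuousLinearMap.coe_coe, hs]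
  rw [this, LinearMap.det_toMatrix']

/-- Transfer of integrals between `ℝ × ℝ` and `Fin 2 → ℝ`. -/
lemma integral_finTwoArrow (g : ℝ × ℝ → ℝ) :
    (∫ z : Fin 2 → ℝ, g (z 0, z 1)) = ∫ v : ℝ × ℝ, g v :=
  (volume_preserving_finTwoArrow ℝ).integral_comp
    (MeasurableEquiv.finTwoArrow).measurableEmbedding g

lemma integrable_finTwoArrow (g : ℝ × ℝ → ℝ) :
    Integrable (fun z : Fin 2 → ℝ => g (z 0, z 1)) ↔ Integrable g :=
  (volume_preserving_finTwoArrow ℝ).integrable_comp_emb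
    (MeasurableEquiv.finTwoArrow).measurableEmbedding

/-- **Bivariate case, misaligned intervention targets (Case 2 of Theorem 5.2).**
If the change-of-variable identities hold with the intervention on `V₁` attributed to
node `Z₂` and the intervention on `V₂` attributed to node `Z₁` (misaligned targets),
then the genericity condition (A4) fails: for every continuous `φ : (0,∞) → ℝ` (with
the required integrability), the expectation of `φ(p̃₂(v₂)/p₂(v₂|v₁))` under the
observational distribution `p₁·p₂` equals that under the interventional distribution
`p̃₁·p₂`. -/
theorem bivariate_misaligned_genericity_fails
    (ψ ψinv : (Fin 2 → ℝ) → (Fin 2 → ℝ))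
    (hψC : ContDiff ℝ 1 ψ) (hψinvC : ContDiff ℝ 1 ψinv)
    (hψli : Function.LeftInverse ψinv ψ) (hψri : Function.RightInverse ψinv ψ)
    (p₁ pt₁ q₁ qt₁ pt₂ qt₂ : ℝ → ℝ) (p₂ q₂ : ℝ → ℝ → ℝ)
    -- continuous differentiability
    (hp₁C : ContDiff ℝ 1 p₁) (hpt₁C : ContDiff ℝ 1 pt₁)
    (hq₁C : ContDiff ℝ 1 q₁) (hqt₁C : ContDiff ℝ 1 qt₁)
    (hpt₂C : ContDiff ℝ 1 pt₂) (hqt₂C : ContDiff ℝ 1 qt₂)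
    (hp₂C : ContDiff ℝ 1 fun v : ℝ × ℝ => p₂ v.1 v.2)
    (hq₂C : ContDiff ℝ 1 fun v : ℝ × ℝ => q₂ v.1 v.2)
    -- strict positivity
    (hp₁pos : ∀ x, 0 < p₁ x) (hpt₁pos : ∀ x, 0 < pt₁ x)
    (hq₁pos : ∀ x, 0 < q₁ x) (hqt₁pos : ∀ x, 0 < qt₁ x)
    (hpt₂pos : ∀ x, 0 < pt₂ x) (hqt₂pos : ∀ x, 0 < qt₂ x)
    (hp₂pos : ∀ v₁ v₂, 0 < p₂ v₁ v₂) (hq₂pos : ∀ z₁ z₂, 0 < q₂ z₁ z₂)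
    -- normalisation
    (hp₁int : ∫ x, p₁ x = 1) (hpt₁int : ∫ x, pt₁ x = 1)
    (hq₁int : ∫ x, q₁ x = 1) (hqt₁int : ∫ x, qt₁ x = 1)
    (hpt₂int : ∫ x, pt₂ x = 1) (hqt₂int : ∫ x, qt₂ x = 1)
    (hp₂int : ∀ v₁, ∫ v₂, p₂ v₁ v₂ = 1) (hq₂int : ∀ z₁, ∫ z₂, q₂ z₁ z₂ = 1)
    -- nowhere-vanishing ratio-derivative conditions (A3)
    (hratio_p₁ : ∀ v₁ : ℝ, deriv (fun v => pt₁ v / p₁ v) v₁ ≠ 0)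
    (hratio_q₁ : ∀ z₁ : ℝ, deriv (fun z => qt₁ z / q₁ z) z₁ ≠ 0)
    (hratio_p₂ : ∀ v₁ v₂ : ℝ, deriv (fun t => pt₂ t / p₂ v₁ t) v₂ ≠ 0)
    (hratio_q₂ : ∀ z₁ z₂ : ℝ, deriv (fun t => qt₂ t / q₂ z₁ t) z₂ ≠ 0)
    -- misaligned-intervention-target change-of-variable identities
    (h0 : ∀ z : Fin 2 → ℝ,
      q₁ (z 0) * q₂ (z 0) (z 1) =
        p₁ (ψ z 0) * p₂ (ψ z 0) (ψ z 1) * |(jacobian ψ z).det|)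
    (h1 : ∀ z : Fin 2 → ℝ,
      qt₁ (z 0) * q₂ (z 0) (z 1) =
        p₁ (ψ z 0) * pt₂ (ψ z 1) * |(jacobian ψ z).det|)
    (h2 : ∀ z : Fin 2 → ℝ,
      q₁ (z 0) * qt₂ (z 1) =
        pt₁ (ψ z 0) * p₂ (ψ z 0) (ψ z 1) * |(jacobian ψ z).det|) :
    ∀ φ : ℝ → ℝ, ContinuousOn φ (Set.Ioi (0 : ℝ)) →
      Integrable (fun v : ℝ × ℝ => φ (pt₂ v.2 / p₂ v.1 v.2) * p₁ v.1 * p₂ v.1 v.2) →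
      Integrable (fun v : ℝ × ℝ => φ (pt₂ v.2 / p₂ v.1 v.2) * pt₁ v.1 * p₂ v.1 v.2) →
      (∫ v : ℝ × ℝ, φ (pt₂ v.2 / p₂ v.1 v.2) * p₁ v.1 * p₂ v.1 v.2) =
        ∫ v : ℝ × ℝ, φ (pt₂ v.2 / p₂ v.1 v.2) * pt₁ v.1 * p₂ v.1 v.2 := by
  intro φ hφcont hint1 hint2
  -- positivity of the Jacobian determinant
  have hDpos : ∀ z : Fin 2 → ℝ, 0 < |(jacobian ψ z).det| := by
    intro z
    have h := h0 z
    have hP : 0 < p₁ (ψ z 0) * p₂ (ψ z 0) (ψ z 1) :=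
      mul_pos (hp₁pos _) (hp₂pos _ _)
    have hQ : 0 < q₁ (z 0) * q₂ (z 0) (z 1) := mul_pos (hq₁pos _) (hq₂pos _ _)
    nlinarith [abs_nonneg (jacobian ψ z).det]
  -- the key ratio identity : the pulled-back ratio depends only on `z 0`
  have hkey : ∀ z : Fin 2 → ℝ,
      pt₂ (ψ z 1) / p₂ (ψ z 0) (ψ z 1) = qt₁ (z 0) / q₁ (z 0) := by
    intro z
    have h0' := h0 z
    have h1' := h1 z
    have hPD : (p₁ (ψ z 0) * |(jacobian ψ z).det|) ≠ 0 :=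
      ne_of_gt (mul_pos (hp₁pos _) (hDpos z))
    have hc : (p₁ (ψ z 0) * |(jacobian ψ z).det|) *
          (pt₂ (ψ z 1) * q₁ (z 0)) =
        (p₁ (ψ z 0) * |(jacobian ψ z).det|) *
          (qt₁ (z 0) * p₂ (ψ z 0) (ψ z 1)) := by
      linear_combination qt₁ (z 0) * h0' - q₁ (z 0) * h1'
    have hc' := mul_left_cancel₀ hPD hc
    rw [div_eq_div_iff (ne_of_gt (hp₂pos _ _)) (ne_of_gt (hq₁pos _))]
    linarith [hc']
  -- differentiability data for the change of variables
  have hfd : ∀ x ∈ (Set.univ : Set (Fin 2 → ℝ)),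
      HasFDerivWithinAt ψ (fderiv ℝ ψ x) Set.univ x := fun x _ =>
    ((hψC.differentiable one_ne_zero) x).hasFDerivAt.hasFDerivWithinAt
  have hIJ : Set.InjOn ψ Set.univ := hψli.injective.injOn
  have himg : ψ '' Set.univ = Set.univ := by
    rw [Set.image_univ]; exact hψri.surjective.range_eq
  -- the two integrands over `Fin 2 → ℝ`
  set F : (Fin 2 → ℝ) → ℝ := fun z =>
    φ (pt₂ (z 1) / p₂ (z 0) (z 1)) * p₁ (z 0) * p₂ (z 0) (z 1) with hFdef
  set G : (Fin 2 → ℝ) → ℝ := fun z =>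
    φ (pt₂ (z 1) / p₂ (z 0) (z 1)) * pt₁ (z 0) * p₂ (z 0) (z 1) with hGdef
  -- pointwise identities after pullback
  have hFid : ∀ z : Fin 2 → ℝ,
      |(fderiv ℝ ψ z).det| • F (ψ z) =
        φ (qt₁ (z 0) / q₁ (z 0)) * q₁ (z 0) * q₂ (z 0) (z 1) := by
    intro z
    have hd := jacobian_det_eq ψ z
    simp only [hFdef, smul_eq_mul, ← hd, hkey z]
    linear_combination (-(φ (qt₁ (z 0) / q₁ (z 0)))) * h0 z
  have hGid : ∀ z : Fin 2 → ℝ,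
      |(fderiv ℝ ψ z).det| • G (ψ z) =
        φ (qt₁ (z 0) / q₁ (z 0)) * q₁ (z 0) * qt₂ (z 1) := by
    intro z
    have hd := jacobian_det_eq ψ z
    simp only [hGdef, smul_eq_mul, ← hd, hkey z]
    linear_combination (-(φ (qt₁ (z 0) / q₁ (z 0)))) * h2 z
  -- change of variables for both integrals
  have cov : ∀ g : (Fin 2 → ℝ) → ℝ,
      (∫ z : Fin 2 → ℝ, g z) = ∫ z : Fin 2 → ℝ, |(fderiv ℝ ψ z).det| • g (ψ z) := by
    intro g
    have := integral_image_eq_integral_abs_det_fderiv_smul (volume : Measure (Fin 2 → ℝ))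
      MeasurableSet.univ hfd hIJ g
    rwa [himg, setIntegral_univ, setIntegral_univ] at this
  have covInt : ∀ g : (Fin 2 → ℝ) → ℝ, Integrable g →
      Integrable (fun z : Fin 2 → ℝ => |(fderiv ℝ ψ z).det| • g (ψ z)) := by
    intro g hg
    have := (integrableOn_image_iff_integrableOn_abs_det_fderiv_smul
      (volume : Measure (Fin 2 → ℝ)) MeasurableSet.univ hfd hIJ g)
    rw [himg, integrableOn_univ, integrableOn_univ] at this
    exact this.mp hg
  -- integrability of the original integrands over `Fin 2 → ℝ`
  have hFint : Integrable F := (integrable_finTwoArrow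
    (fun v : ℝ × ℝ => φ (pt₂ v.2 / p₂ v.1 v.2) * p₁ v.1 * p₂ v.1 v.2)).mpr hint1
  have hGint : Integrable G := (integrable_finTwoArrow
    (fun v : ℝ × ℝ => φ (pt₂ v.2 / p₂ v.1 v.2) * pt₁ v.1 * p₂ v.1 v.2)).mpr hint2
  -- the transformed integrands over `ℝ × ℝ`
  have hH1int : Integrable (fun v : ℝ × ℝ =>
      φ (qt₁ v.1 / q₁ v.1) * q₁ v.1 * q₂ v.1 v.2) := by
    have := covInt F hFint
    have h := (integrable_finTwoArrow
      (fun v : ℝ × ℝ => φ (qt₁ v.1 / q₁ v.1) * q₁ v.1 * q₂ v.1 v.2)).mp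
    apply h
    convert this using 1
    · rfl
    funext z
    exact (hFid z).symm
  have hH2int : Integrable (fun v : ℝ × ℝ =>
      φ (qt₁ v.1 / q₁ v.1) * q₁ v.1 * qt₂ v.2) := by
    have := covInt G hGint
    have h := (integrable_finTwoArrow
      (fun v : ℝ × ℝ => φ (qt₁ v.1 / q₁ v.1) * q₁ v.1 * qt₂ v.2)).mp
    apply h
    convert this using 1
    · rfl
    funext z
    exact (hGid z).symm
  -- rewrite both sides via change of variables
  have e1 : (∫ v : ℝ × ℝ, φ (pt₂ v.2 / p₂ v.1 v.2) * p₁ v.1 * p₂ v.1 v.2) =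
      ∫ v : ℝ × ℝ, φ (qt₁ v.1 / q₁ v.1) * q₁ v.1 * q₂ v.1 v.2 := by
    rw [← integral_finTwoArrow
      (fun v : ℝ × ℝ => φ (pt₂ v.2 / p₂ v.1 v.2) * p₁ v.1 * p₂ v.1 v.2),
      ← integral_finTwoArrow
      (fun v : ℝ × ℝ => φ (qt₁ v.1 / q₁ v.1) * q₁ v.1 * q₂ v.1 v.2)]
    rw [show (fun z : Fin 2 → ℝ =>
        φ (pt₂ (z 1) / p₂ (z 0) (z 1)) * p₁ (z 0) * p₂ (z 0) (z 1)) = F from rfl,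
      cov F]
    congr 1
    funext z
    exact hFid z
  have e2 : (∫ v : ℝ × ℝ, φ (pt₂ v.2 / p₂ v.1 v.2) * pt₁ v.1 * p₂ v.1 v.2) =
      ∫ v : ℝ × ℝ, φ (qt₁ v.1 / q₁ v.1) * q₁ v.1 * qt₂ v.2 := by
    rw [← integral_finTwoArrow
      (fun v : ℝ × ℝ => φ (pt₂ v.2 / p₂ v.1 v.2) * pt₁ v.1 * p₂ v.1 v.2),
      ← integral_finTwoArrow
      (fun v : ℝ × ℝ => φ (qt₁ v.1 / q₁ v.1) * q₁ v.1 * qt₂ v.2)]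
    rw [show (fun z : Fin 2 → ℝ =>
        φ (pt₂ (z 1) / p₂ (z 0) (z 1)) * pt₁ (z 0) * p₂ (z 0) (z 1)) = G from rfl,
      cov G]
    congr 1
    funext z
    exact hGid z
  rw [e1, e2]
  -- Fubini on both sides
  rw [show (volume : Measure (ℝ × ℝ)) = (volume : Measure ℝ).prod volume from rfl] at hH1int hH2int ⊢
  rw [integral_prod _ hH1int, integral_prod _ hH2int]
  congr 1
  funext x
  simp only [mul_assoc, integral_const_mul, hq₂int x, hqt₂int]
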